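/- arXiv:2208.08809 — 8 statements merged into one kernel-verified Lean document; each statement's English description precedes it below -/
import Mathlib

section
/- For every path P_n on n ≥ 3 vertices, the 2-multigraph ²P_n obtained from P_n by doubling every edge admits a decomposition into at most 2 locally irregular submultigraphs, i.e. lir(²P_n) ≤ 2. -/
def mdeg {V : Type*} [Fintype V] (μ : V → V → ℕ) (v : V) : ℕ := ∑ u, μ v u

def MulLocIrreg {V : Type*} [Fintype V] (μ : V → V → ℕ) : Prop :=
  ∀ v w, 0 < μ v w → mdeg μ v ≠ mdeg μ w

def IsLirDecomp {V : Type*} [Fintype V] (G : SimpleGraph V) (k : ℕ)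
    (μs : Fin k → V → V → ℕ) : Prop :=
  (∀ i v w, μs i v w = μs i w v) ∧
  (∀ i v w, 0 < μs i v w → G.Adj v w) ∧
  (∀ v w, G.Adj v w → ∑ i, μs i v w = 2) ∧
  (∀ i, MulLocIrreg (μs i))

/-- the edge pattern for the first part -/
def pat (m j : ℕ) : ℕ := if j < m then j % 3 else if m % 3 = 1 then 0 else 2

/-- the edge pattern for the second part -/
def pat2 (m j : ℕ) : ℕ := 2 - pat m j

lemma pat_le_two (m j : ℕ) : pat m j ≤ 2 := by
  unfold pat; split_ifs <;> omega

/-- multiplicity function from an edge-weight `g` on edge indices -/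
def edgeMu (n : ℕ) (g : ℕ → ℕ) (v w : Fin n) : ℕ :=
  if (v : ℕ) + 1 = (w : ℕ) then g v else if (w : ℕ) + 1 = (v : ℕ) then g w else 0

lemma edgeMu_symm (n : ℕ) (g : ℕ → ℕ) (v w : Fin n) :
    edgeMu n g v w = edgeMu n g w v := by
  unfold edgeMu
  split_ifs <;> first | rfl | omega

lemma edgeMu_support (n : ℕ) (g : ℕ → ℕ) (v w : Fin n) (h : 0 < edgeMu n g v w) :
    (v : ℕ) + 1 = (w : ℕ) ∨ (w : ℕ) + 1 = (v : ℕ) := by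
  unfold edgeMu at h
  split_ifs at h with ha hb
  · exact Or.inl ha
  · exact Or.inr hb
  · omega

lemma mdeg_edgeMu (n : ℕ) (g : ℕ → ℕ) (v : Fin n) :
    mdeg (edgeMu n g) v =
      (if 0 < (v : ℕ) then g ((v : ℕ) - 1) else 0) +
      (if (v : ℕ) + 1 < n then g (v : ℕ) else 0) := by
  have hrange : mdeg (edgeMu n g) v =
      ∑ k ∈ Finset.range n,
        (if (v : ℕ) + 1 = k then g (v : ℕ) else if k + 1 = (v : ℕ) then g k else 0) := by
    unfold mdeg edgeMu
    exact Fin.sum_univ_eq_sum_range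
      (fun k => if (v : ℕ) + 1 = k then g (v : ℕ) else if k + 1 = (v : ℕ) then g k else 0) n
  rw [hrange]
  by_cases h0 : 0 < (v : ℕ)
  · have hsplit : ∀ k ∈ Finset.range n,
        (if (v : ℕ) + 1 = k then g (v : ℕ) else if k + 1 = (v : ℕ) then g k else 0) =
        (if k = (v : ℕ) + 1 then g (v : ℕ) else 0) +
          (if k = (v : ℕ) - 1 then g ((v : ℕ) - 1) else 0) := by
      intro k _
      by_cases hk1 : (v : ℕ) + 1 = k
      · rw [if_pos hk1, if_pos hk1.symm, if_neg (by omega), Nat.add_zero]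
      · by_cases hk2 : k + 1 = (v : ℕ)
        · have hk3 : k = (v : ℕ) - 1 := by omega
          rw [if_neg hk1, if_pos hk2, if_neg (by omega), if_pos hk3, hk3, Nat.zero_add]
        · rw [if_neg hk1, if_neg hk2, if_neg (by omega), if_neg (by omega), Nat.add_zero]
    rw [Finset.sum_congr rfl hsplit, Finset.sum_add_distrib,
        Finset.sum_ite_eq' (Finset.range n) ((v : ℕ) + 1),
        Finset.sum_ite_eq' (Finset.range n) ((v : ℕ) - 1)]
    have hv : (v : ℕ) < n := v.isLt
    simp only [Finset.mem_range]
    rw [if_pos h0, if_pos (by omega : (v : ℕ) - 1 < n)]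
    exact Nat.add_comm _ _
  · have hsplit : ∀ k ∈ Finset.range n,
        (if (v : ℕ) + 1 = k then g (v : ℕ) else if k + 1 = (v : ℕ) then g k else 0) =
        (if k = (v : ℕ) + 1 then g (v : ℕ) else 0) := by
      intro k _
      by_cases hk1 : (v : ℕ) + 1 = k
      · rw [if_pos hk1, if_pos hk1.symm]
      · rw [if_neg hk1, if_neg (by omega), if_neg (by omega)]
    rw [Finset.sum_congr rfl hsplit, Finset.sum_ite_eq' (Finset.range n) ((v : ℕ) + 1)]
    simp only [Finset.mem_range]
    rw [if_neg h0, Nat.zero_add]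

lemma locIrreg_of (n : ℕ) (g : ℕ → ℕ)
    (key : ∀ j : ℕ, j + 1 < n → 0 < g j →
      (if 0 < j then g (j - 1) else 0) ≠ (if j + 1 + 1 < n then g (j + 1) else 0)) :
    MulLocIrreg (edgeMu n g) := by
  intro v w hvw
  have hcase : ((v : ℕ) + 1 = (w : ℕ) ∧ 0 < g (v : ℕ)) ∨
      ((w : ℕ) + 1 = (v : ℕ) ∧ 0 < g (w : ℕ)) := by
    unfold edgeMu at hvw
    split_ifs at hvw with ha hb
    · exact Or.inl ⟨ha, hvw⟩
    · exact Or.inr ⟨hb, hvw⟩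
    · omega
  rw [mdeg_edgeMu, mdeg_edgeMu]
  rcases hcase with ⟨h, hg⟩ | ⟨h, hg⟩
  · have h1 : (v : ℕ) + 1 < n := by have := w.isLt; omega
    have hw : (w : ℕ) = (v : ℕ) + 1 := h.symm
    rw [hw]
    have hk := key (v : ℕ) h1 hg
    rw [Nat.add_sub_cancel]
    split_ifs at hk ⊢ <;> omega
  · have h1 : (w : ℕ) + 1 < n := by have := v.isLt; omega
    have hv : (v : ℕ) = (w : ℕ) + 1 := h.symm
    rw [hv]
    have hk := key (w : ℕ) h1 hg
    rw [Nat.add_sub_cancel]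
    split_ifs at hk ⊢ <;> omega

lemma arith1 (n j : ℕ) (hn : 3 ≤ n) (hj : j + 1 < n) (hpos : 0 < pat (n - 2) j) :
    (if 0 < j then pat (n - 2) (j - 1) else 0) ≠
      (if j + 1 + 1 < n then pat (n - 2) (j + 1) else 0) := by
  unfold pat at *
  split_ifs at * <;> omega

lemma arith2 (n j : ℕ) (hn : 3 ≤ n) (hj : j + 1 < n) (hpos : 0 < pat2 (n - 2) j) :
    (if 0 < j then pat2 (n - 2) (j - 1) else 0) ≠
      (if j + 1 + 1 < n then pat2 (n - 2) (j + 1) else 0) := by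
  unfold pat2 pat at *
  split_ifs at * <;> omega

/-- For every path `P n` on `n ≥ 3` vertices, the 2-multigraph `²Pₙ` obtained by
doubling every edge decomposes into at most 2 locally irregular submultigraphs. -/
theorem lir_doubled_path_le_two (n : ℕ) (hn : 3 ≤ n) :
    ∃ μs : Fin 2 → Fin n → Fin n → ℕ, IsLirDecomp (SimpleGraph.pathGraph n) 2 μs := by
  refine ⟨![edgeMu n (pat (n - 2)), edgeMu n (pat2 (n - 2))], ?_, ?_, ?_, ?_⟩
  · intro i v w
    fin_cases i
    · exact edgeMu_symm n (pat (n - 2)) v w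
    · exact edgeMu_symm n (pat2 (n - 2)) v w
  · intro i v w hpos
    rw [SimpleGraph.pathGraph_adj]
    fin_cases i
    · exact edgeMu_support n (pat (n - 2)) v w hpos
    · exact edgeMu_support n (pat2 (n - 2)) v w hpos
  · intro v w hadj
    rw [SimpleGraph.pathGraph_adj] at hadj
    rw [Fin.sum_univ_two]
    show edgeMu n (pat (n - 2)) v w + edgeMu n (pat2 (n - 2)) v w = 2
    have h1 := pat_le_two (n - 2) (v : ℕ)
    have h2 := pat_le_two (n - 2) (w : ℕ)
    unfold edgeMu pat2
    split_ifs <;> omega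
  · intro i
    fin_cases i
    · exact locIrreg_of n (pat (n - 2)) (fun j hj hg => arith1 n j hn hj hg)
    · exact locIrreg_of n (pat2 (n - 2)) (fun j hj hg => arith2 n j hn hj hg)
end

section
/- For every cycle C_n of length n ≥ 3, the 2-multigraph ²C_n obtained from C_n by doubling every edge admits a decomposition into at most 2 locally irregular submultigraphs, i.e. lir(²C_n) ≤ 2. -/
/-!
Give the edge `{v, v + 1}` of the cycle multiplicity `c v` in the first part and `2 - c v` in
the second. The degree of `v` in the first part is `c (v - 1) + c v`, so both parts are locally
irregular as soon as `c v ≠ c (v + 2)` for every `v`, i.e. `c` properly colors the graph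
`v ~ v + 2`. That graph is a union of at most two cycles, so three colors `0, 1, 2` suffice.
-/

namespace CycleMultigraph

open SimpleGraph Fin.CommRing

variable {n : ℕ}

def mult (h : Fin (n + 3) → ℕ) (v w : Fin (n + 3)) : ℕ :=
  if w = v + 1 then h v else if v = w + 1 then h w else 0

lemma add_two_ne_self (v : Fin (n + 3)) : v + 2 ≠ v := by
  intro hv
  have h2 : (2 : Fin (n + 3)) = 0 := by linear_combination hv
  rw [Fin.ext_iff, Fin.val_two, Fin.val_zero] at h2
  omega

lemma add_one_ne_sub_one (v : Fin (n + 3)) : v + 1 ≠ v - 1 := by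
  intro hv
  exact add_two_ne_self (v - 1) (by linear_combination hv)

lemma ne_add_one_of_eq_add_one {v w : Fin (n + 3)} (hw : w = v + 1) : v ≠ w + 1 := by
  intro hv
  exact add_two_ne_self v (by linear_combination -(hv + hw))

lemma mult_comm (h : Fin (n + 3) → ℕ) (v w : Fin (n + 3)) : mult h v w = mult h w v := by
  unfold mult
  by_cases hw : w = v + 1
  · rw [if_pos hw, if_neg (ne_add_one_of_eq_add_one hw), if_pos hw]
  · by_cases hv : v = w + 1
    · rw [if_neg hw, if_pos hv, if_pos hv]
    · rw [if_neg hw, if_neg hv, if_neg hv, if_neg hw]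

lemma cycleGraph_adj_iff {v w : Fin (n + 3)} :
    (cycleGraph (n + 3)).Adj v w ↔ w = v + 1 ∨ v = w + 1 := by
  simp only [cycleGraph_adj, sub_eq_iff_eq_add, add_comm (1 : Fin (n + 3))]
  exact or_comm

lemma adj_of_mult_pos {h : Fin (n + 3) → ℕ} {v w : Fin (n + 3)} (hvw : 0 < mult h v w) :
    (cycleGraph (n + 3)).Adj v w := by
  unfold mult at hvw
  split_ifs at hvw with hw hv
  · exact cycleGraph_adj_iff.2 (Or.inl hw)
  · exact cycleGraph_adj_iff.2 (Or.inr hv)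
  · exact absurd hvw (lt_irrefl 0)

lemma exists_mult_eq_of_adj {v w : Fin (n + 3)} (hvw : (cycleGraph (n + 3)).Adj v w) :
    ∃ e, ∀ h, mult h v w = h e := by
  rcases cycleGraph_adj_iff.1 hvw with hw | hv
  · exact ⟨v, fun h => if_pos hw⟩
  · exact ⟨w, fun h => by rw [mult, if_neg (ne_add_one_of_eq_add_one hv), if_pos hv]⟩

lemma mdeg_mult (h : Fin (n + 3) → ℕ) (v : Fin (n + 3)) :
    mdeg (mult h) v = h (v - 1) + h v := by
  have hsplit : ∀ u, mult h v u =
      (if u = v + 1 then h v else 0) + (if u = v - 1 then h (v - 1) else 0) := by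
    intro u
    unfold mult
    by_cases hu : u = v + 1
    · rw [if_pos hu, if_pos hu, if_neg (hu ▸ add_one_ne_sub_one v), add_zero]
    · have hv : v = u + 1 ↔ u = v - 1 := ⟨fun h => by rw [h]; ring, fun h => by rw [h]; ring⟩
      by_cases hu' : u = v - 1
      · rw [if_neg hu, if_pos (hv.2 hu'), if_neg hu, if_pos hu', hu', zero_add]
      · rw [if_neg hu, if_neg (mt hv.1 hu'), if_neg hu, if_neg hu']
  rw [mdeg, Finset.sum_congr rfl fun u _ => hsplit u, Finset.sum_add_distrib,
    Finset.sum_ite_eq', Finset.sum_ite_eq', if_pos (Finset.mem_univ _),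
    if_pos (Finset.mem_univ _), add_comm]

lemma mulLocIrreg_mult {h : Fin (n + 3) → ℕ} (hh : ∀ v, h v ≠ h (v + 2)) :
    MulLocIrreg (mult h) := by
  have hstep : ∀ u, mdeg (mult h) u ≠ mdeg (mult h) (u + 1) := by
    intro u
    have := hh (u - 1)
    rw [show u - 1 + 2 = u + 1 by ring] at this
    rw [mdeg_mult, mdeg_mult, add_sub_cancel_right]
    omega
  intro v w hvw
  rcases cycleGraph_adj_iff.1 (adj_of_mult_pos hvw) with rfl | rfl
  · exact hstep v
  · exact (hstep w).symm

theorem isLirDecomp {k : ℕ} (hs : Fin k → Fin (n + 3) → ℕ) (hsum : ∀ e, ∑ i, hs i e = 2)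
    (hirr : ∀ i v, hs i v ≠ hs i (v + 2)) :
    IsLirDecomp (cycleGraph (n + 3)) k (fun i => mult (hs i)) := by
  refine ⟨fun i => mult_comm (hs i), fun i v w => adj_of_mult_pos, fun v w hvw => ?_,
    fun i => mulLocIrreg_mult (hirr i)⟩
  obtain ⟨e, he⟩ := exists_mult_eq_of_adj hvw
  simp only [he, hsum]

/-- A proper coloring with colors `0, 1, 2` of the graph `v ~ v + 2`, a union of at most two
cycles: vertices `0, …, n` are colored `0, 0, 1, 1, 0, 0, …` and the last two get color `2`,
except that the triangle (`n = 0`) needs the third color `1`. -/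
def distTwoColoring (n : ℕ) (v : Fin (n + 3)) : ℕ :=
  if v.val ≤ n then v.val / 2 % 2 else if n = 0 ∧ v.val = 2 then 1 else 2

lemma distTwoColoring_le_two (v : Fin (n + 3)) : distTwoColoring n v ≤ 2 := by
  unfold distTwoColoring
  split_ifs <;> omega

lemma distTwoColoring_ne_add_two (v : Fin (n + 3)) :
    distTwoColoring n v ≠ distTwoColoring n (v + 2) := by
  have hval : (v + 2).val = (v.val + 2) % (n + 3) := by
    rw [Fin.val_add, Fin.val_two]
  have hwrap : (v.val + 2) % (n + 3) = if v.val ≤ n then v.val + 2 else v.val - (n + 1) := by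
    split_ifs with hv
    · exact Nat.mod_eq_of_lt (by omega)
    · rw [Nat.mod_eq_sub_mod (by omega), Nat.mod_eq_of_lt (by omega)]
      omega
  unfold distTwoColoring
  rw [hval, hwrap]
  have := v.isLt
  split_ifs <;> omega

end CycleMultigraph

open CycleMultigraph

/-- For every cycle `C n` of length `n ≥ 3`, the 2-multigraph `²Cₙ` obtained by
doubling every edge decomposes into at most 2 locally irregular submultigraphs. -/
theorem lir_doubled_cycle_le_two (n : ℕ) (hn : 3 ≤ n) :
    ∃ μs : Fin 2 → Fin n → Fin n → ℕ, IsLirDecomp (SimpleGraph.cycleGraph n) 2 μs := by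
  obtain ⟨n, rfl⟩ := Nat.exists_eq_add_of_le' hn
  have hle := distTwoColoring_le_two (n := n)
  have hne := distTwoColoring_ne_add_two (n := n)
  refine ⟨_, isLirDecomp ![distTwoColoring n, fun v => 2 - distTwoColoring n v]
    (fun e => ?_) (Fin.forall_fin_two.2 ⟨hne, fun v => ?_⟩)⟩
  · have := hle e
    simp only [Fin.sum_univ_two, Matrix.cons_val_zero, Matrix.cons_val_one]
    omega
  · have := hne v
    have := hle v
    have := hle (v + 2)
    simp only [Matrix.cons_val_one, Matrix.cons_val_zero]
    omega
end

section
/- For every wheel W_n of order n ≥ 4, the 2-multigraph ²W_n obtained from W_n by doubling every edge admits a decomposition into at most 2 locally irregular submultigraphs, i.e. lir(²W_n) ≤ 2. -/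
/-- The wheel of order `m + 1`: a cycle of length `m` (on the vertices `some i`)
together with one central vertex (`none`) joined to all vertices of the cycle. -/
def wheelGraph (m : ℕ) : SimpleGraph (Option (Fin m)) :=
  SimpleGraph.fromRel (fun u v =>
    (u = none ∧ v ≠ none) ∨
    (∃ i j : Fin m, u = some i ∧ v = some j ∧ (SimpleGraph.cycleGraph m).Adj i j))


/-!
Give the first part both copies of every spoke and `c i ∈ {0, 1, 2}` copies of the rim edge
`{i, i + 1}`, and the second part the remaining `2 - c i` copies. The rim vertex `i` then has
degree `2 + c i + c (i - 1)` in the first part and `4 - c i - c (i - 1)` in the second, so the rim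
neighbours `i` and `i + 1` have distinct degrees in both parts as soon as `c (i - 1) ≠ c (i + 1)`.
The hub, of degree `2 (n - 1)`, only has to differ from the rim vertices in the first part. Taking
`c i = i % 3`, repaired at the end of the rim, meets both conditions.
-/

namespace Fin

variable {m : ℕ} [NeZero m]

theorem val_one_of_two_le (hm : 2 ≤ m) : (1 : Fin m).val = 1 :=
  Nat.mod_eq_of_lt hm

theorem val_add_one_of_two_le (hm : 2 ≤ m) (i : Fin m) :
    (i + 1).val = if i.val + 1 = m then 0 else i.val + 1 := by
  rw [val_add, val_one_of_two_le hm]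
  split_ifs with h
  · rw [h, Nat.mod_self]
  · exact Nat.mod_eq_of_lt (by omega)

theorem val_sub_one_of_two_le (hm : 2 ≤ m) (i : Fin m) :
    (i - 1).val = if i.val = 0 then m - 1 else i.val - 1 := by
  have h := val_add_one_of_two_le hm (i - 1)
  rw [sub_add_cancel] at h
  have := (i - 1).isLt
  split_ifs at h ⊢ <;> omega

theorem add_one_ne_self (hm : 2 ≤ m) (i : Fin m) : i + 1 ≠ i := by
  rw [Ne, add_eq_left, Fin.ext_iff, val_one_of_two_le hm, val_zero]
  exact one_ne_zero

theorem add_one_add_one_ne_self (hm : 3 ≤ m) (i : Fin m) : i + 1 + 1 ≠ i := by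
  rw [Ne, Fin.ext_iff, val_add_one_of_two_le (by omega), val_add_one_of_two_le (by omega)]
  have := i.isLt
  split_ifs <;> omega

theorem add_one_ne_sub_one (hm : 3 ≤ m) (i : Fin m) : i + 1 ≠ i - 1 := fun h =>
  add_one_add_one_ne_self hm (i - 1) (by rwa [sub_add_cancel])

end Fin

open SimpleGraph

section Wheel

variable {m : ℕ} [NeZero m]

theorem cycleGraph_adj_iff_eq_add_one (hm : 2 ≤ m) {i j : Fin m} :
    (cycleGraph m).Adj i j ↔ j = i + 1 ∨ i = j + 1 := by
  rw [cycleGraph_adj', ← Fin.val_one_of_two_le hm, ← Fin.ext_iff, ← Fin.ext_iff,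
    sub_eq_iff_eq_add, sub_eq_iff_eq_add, add_comm 1, add_comm 1, or_comm]

theorem wheelGraph_adj_none_some (j : Fin m) : (wheelGraph m).Adj none (some j) := by
  simp [wheelGraph]

theorem wheelGraph_adj_some_some (hm : 2 ≤ m) {i j : Fin m} :
    (wheelGraph m).Adj (some i) (some j) ↔ j = i + 1 ∨ i = j + 1 := by
  simp only [wheelGraph, fromRel_adj, cycleGraph_adj_iff_eq_add_one hm]
  aesop (add safe Fin.add_one_ne_self)

def wheelMult (h : ℕ) (c : Fin m → ℕ) : Option (Fin m) → Option (Fin m) → ℕ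
  | none, none => 0
  | none, some _ | some _, none => h
  | some i, some j => if j = i + 1 then c i else if i = j + 1 then c j else 0

variable {h : ℕ} {c : Fin m → ℕ}

theorem wheelMult_comm (hm : 3 ≤ m) (v w : Option (Fin m)) :
    wheelMult h c v w = wheelMult h c w v := by
  match v, w with
  | none, none | none, some _ | some _, none => rfl
  | some i, some j =>
    simp only [wheelMult]
    split_ifs with hj hi <;> try rfl
    exact absurd (hi ▸ hj).symm (Fin.add_one_add_one_ne_self hm j)

theorem wheelMult_add (h' : ℕ) (c' : Fin m → ℕ) (v w : Option (Fin m)) :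
    wheelMult h c v w + wheelMult h' c' v w = wheelMult (h + h') (c + c') v w := by
  match v, w with
  | none, none | none, some _ | some _, none => rfl
  | some i, some j =>
    simp only [wheelMult]
    split_ifs <;> rfl

theorem wheelGraph_adj_of_wheelMult_pos (hm : 2 ≤ m) {v w : Option (Fin m)}
    (hvw : 0 < wheelMult h c v w) : (wheelGraph m).Adj v w := by
  match v, w with
  | none, none => exact absurd hvw (lt_irrefl 0)
  | none, some j => exact wheelGraph_adj_none_some j
  | some i, none => exact (wheelGraph_adj_none_some i).symm
  | some i, some j =>
    rw [wheelGraph_adj_some_some hm]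
    simp only [wheelMult] at hvw
    split_ifs at hvw with hj hi
    exacts [Or.inl hj, Or.inr hi, absurd hvw (lt_irrefl 0)]

theorem wheelMult_const_of_adj (hm : 2 ≤ m) {v w : Option (Fin m)} (hvw : (wheelGraph m).Adj v w) :
    wheelMult h (fun _ => h) v w = h := by
  match v, w with
  | none, none => exact absurd hvw (wheelGraph m).irrefl
  | none, some _ | some _, none => rfl
  | some i, some j =>
    rw [wheelGraph_adj_some_some hm] at hvw
    simp only [wheelMult]
    split_ifs <;> tauto

theorem mdeg_wheelMult_none : mdeg (wheelMult h c) none = m * h := by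
  simp [mdeg, Fintype.sum_option, wheelMult]

theorem mdeg_wheelMult_some (hm : 3 ≤ m) (i : Fin m) :
    mdeg (wheelMult h c) (some i) = h + c i + c (i - 1) := by
  have hrim : ∀ j, wheelMult h c (some i) (some j) =
      (if j = i + 1 then c i else 0) + (if j = i - 1 then c (i - 1) else 0) := by
    intro j
    have hpred : i = j + 1 ↔ j = i - 1 := by rw [eq_sub_iff_add_eq, eq_comm]
    simp only [wheelMult, hpred]
    split_ifs with hsucc hpred' hpred'
    · exact absurd (hsucc ▸ hpred') (Fin.add_one_ne_sub_one hm i)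
    · rfl
    · rw [hpred', zero_add]
    · rfl
  rw [mdeg, Fintype.sum_option, Finset.sum_congr rfl fun j _ => hrim j, Finset.sum_add_distrib,
    Finset.sum_ite_eq', Finset.sum_ite_eq']
  simp [wheelMult, add_assoc]

theorem mulLocIrreg_wheelMult (hm : 3 ≤ m) (hrim : ∀ i, c (i - 1) ≠ c (i + 1))
    (hhub : 0 < h → ∀ i, h + c i + c (i - 1) ≠ m * h) : MulLocIrreg (wheelMult h c) := by
  have hsucc : ∀ i, mdeg (wheelMult h c) (some i) ≠ mdeg (wheelMult h c) (some (i + 1)) := by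
    intro i
    rw [mdeg_wheelMult_some hm, mdeg_wheelMult_some hm, add_sub_cancel_right]
    have := hrim i
    omega
  intro v w hvw
  match v, w with
  | none, none => exact absurd hvw (lt_irrefl 0)
  | none, some j =>
    rw [mdeg_wheelMult_none, mdeg_wheelMult_some hm]
    exact (hhub hvw j).symm
  | some i, none =>
    rw [mdeg_wheelMult_none, mdeg_wheelMult_some hm]
    exact hhub hvw i
  | some i, some j =>
    rcases (wheelGraph_adj_some_some (by omega)).mp (wheelGraph_adj_of_wheelMult_pos (by omega) hvw)
      with rfl | rfl
    exacts [hsucc i, (hsucc j).symm]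

theorem isLirDecomp_wheelMult (hm : 3 ≤ m) (hc : ∀ i, c i ≤ 2) (hrim : ∀ i, c (i - 1) ≠ c (i + 1))
    (hhub : ∀ i, 2 + c i + c (i - 1) ≠ m * 2) :
    IsLirDecomp (wheelGraph m) 2 ![wheelMult 2 c, wheelMult 0 fun i => 2 - c i] := by
  refine ⟨fun k v w => ?_, fun k v w => ?_, fun v w hvw => ?_, fun k => ?_⟩
  · fin_cases k <;> exact wheelMult_comm hm v w
  · fin_cases k <;> exact wheelGraph_adj_of_wheelMult_pos (by omega)
  · have hsum : c + (fun i => 2 - c i) = fun _ => 2 := funext fun i => Nat.add_sub_cancel' (hc i)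
    simpa [wheelMult_add, hsum] using wheelMult_const_of_adj (h := 2) (by omega) hvw
  · fin_cases k
    · exact mulLocIrreg_wheelMult hm hrim fun _ => hhub
    · refine mulLocIrreg_wheelMult hm (fun i => ?_) (absurd · (lt_irrefl 0))
      have := hrim i
      have := hc (i - 1)
      have := hc (i + 1)
      omega

end Wheel

/-- `i % 3` along the rim, except that for `m ≡ 2 [MOD 3]` the last two labels are `2, 0`:
otherwise the labels `(m - 1) % 3 = 1` and `1` would meet two apart across the wrap-around. -/
def rimLabel (m : ℕ) (i : Fin m) : ℕ :=
  if m % 3 = 2 ∧ i.val = m - 2 then 2 else if m % 3 = 2 ∧ i.val = m - 1 then 0 else i.val % 3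

theorem rimLabel_le_two {m : ℕ} (i : Fin m) : rimLabel m i ≤ 2 := by
  unfold rimLabel
  split_ifs <;> omega

section RimLabel

variable {m : ℕ} [NeZero m]

theorem rimLabel_sub_one_ne_add_one (hm : 3 ≤ m) (i : Fin m) :
    rimLabel m (i - 1) ≠ rimLabel m (i + 1) := by
  unfold rimLabel
  rw [Fin.val_sub_one_of_two_le (by omega), Fin.val_add_one_of_two_le (by omega)]
  have := i.isLt
  split_ifs <;> omega

theorem rimLabel_add_rimLabel_sub_one_ne (hm : 3 ≤ m) (i : Fin m) :
    2 + rimLabel m i + rimLabel m (i - 1) ≠ m * 2 := by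
  unfold rimLabel
  rw [Fin.val_sub_one_of_two_le (by omega)]
  have := i.isLt
  split_ifs <;> omega

end RimLabel

/-- For every wheel `W n` of order `n ≥ 4` (a cycle of length `n - 1` plus a central
vertex joined to all cycle vertices), the 2-multigraph `²Wₙ` obtained by doubling
every edge decomposes into at most 2 locally irregular submultigraphs. -/
theorem lir_doubled_wheel_le_two (n : ℕ) (hn : 4 ≤ n) :
    ∃ μs : Fin 2 → Option (Fin (n - 1)) → Option (Fin (n - 1)) → ℕ,
      IsLirDecomp (wheelGraph (n - 1)) 2 μs := by
  have hm : 3 ≤ n - 1 := by omega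
  have : NeZero (n - 1) := ⟨by omega⟩
  exact ⟨_, isLirDecomp_wheelMult hm rimLabel_le_two (rimLabel_sub_one_ne_add_one hm)
    (rimLabel_add_rimLabel_sub_one_ne hm)⟩
end

section
/- For every complete graph K_n with n ≥ 3, the 2-multigraph ²K_n obtained from K_n by doubling every edge admits a decomposition into at most 2 locally irregular submultigraphs, i.e. lir(²K_n) ≤ 2. -/
/-! ### Auxiliary construction for `n ≥ 4` -/

/-- First part of the decomposition: edge `{v,w}` gets multiplicity
`[n-1 ≤ v+w] + [n+1 ≤ v+w]`. -/
def mu0 (n : ℕ) (v w : Fin n) : ℕ :=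
  if v = w then 0 else
    ((if n - 1 ≤ (v : ℕ) + w then 1 else 0) + (if n + 1 ≤ (v : ℕ) + w then 1 else 0))

/-- Second part: complement of `mu0` to total multiplicity 2. -/
def mu1 (n : ℕ) (v w : Fin n) : ℕ :=
  if v = w then 0 else 2 - mu0 n v w

lemma mu0_le_two (n : ℕ) (v w : Fin n) : mu0 n v w ≤ 2 := by
  unfold mu0; split_ifs <;> omega

lemma mu0_symm (n : ℕ) (v w : Fin n) : mu0 n v w = mu0 n w v := by
  unfold mu0
  by_cases h : v = w
  · simp [h]
  · rw [if_neg h, if_neg (Ne.symm h), Nat.add_comm (v : ℕ) (w : ℕ)]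

lemma mu0_diag (n : ℕ) (v : Fin n) : mu0 n v v = 0 := by simp [mu0]

/-- Closed form of the degrees in `mu0`. -/
def Dfun (n k : ℕ) : ℕ :=
  ((k + 1) + (k - 1)) - ((if n - 1 ≤ k + k then 1 else 0) + (if n + 1 ≤ k + k then 1 else 0))

lemma aux_count (m c v : ℕ) :
    (∑ i ∈ Finset.range m, if c ≤ v + i then 1 else 0) = m - (c - v) := by
  induction m with
  | zero => simp
  | succ m ih =>
    rw [Finset.sum_range_succ, ih]
    split_ifs <;> omega

lemma mdeg_mu0 (n : ℕ) (hn : 1 ≤ n) (v : Fin n) : mdeg (mu0 n) v = Dfun n v.val := by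
  have hv : (v : ℕ) < n := v.isLt
  have e1 : ∀ u : Fin n,
      mu0 n v u + (if u = v then
        ((if n - 1 ≤ (v : ℕ) + u then 1 else 0) + (if n + 1 ≤ (v : ℕ) + u then 1 else 0))
        else 0) =
      ((if n - 1 ≤ (v : ℕ) + u then 1 else 0) + (if n + 1 ≤ (v : ℕ) + u then 1 else 0)) := by
    intro u
    by_cases h : u = v
    · subst h; simp [mu0]
    · have h' : ¬ v = u := fun hh => h hh.symm
      rw [if_neg h, mu0, if_neg h', Nat.add_zero]
  have h2 : (∑ u : Fin n, mu0 n v u) + (∑ u : Fin n, (if u = v then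
        ((if n - 1 ≤ (v : ℕ) + u then 1 else 0) + (if n + 1 ≤ (v : ℕ) + u then 1 else 0))
        else 0)) =
      ∑ u : Fin n,
        ((if n - 1 ≤ (v : ℕ) + u then 1 else 0) + (if n + 1 ≤ (v : ℕ) + u then 1 else 0)) := by
    rw [← Finset.sum_add_distrib]
    exact Finset.sum_congr rfl (fun u _ => e1 u)
  rw [Finset.sum_ite_eq' Finset.univ v] at h2
  rw [if_pos (Finset.mem_univ v)] at h2
  rw [Finset.sum_add_distrib] at h2
  rw [Fin.sum_univ_eq_sum_range (fun i => if n - 1 ≤ (v : ℕ) + i then 1 else 0)] at h2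
  rw [Fin.sum_univ_eq_sum_range (fun i => if n + 1 ≤ (v : ℕ) + i then 1 else 0)] at h2
  rw [aux_count n (n - 1) (v : ℕ), aux_count n (n + 1) (v : ℕ)] at h2
  have hm : mdeg (mu0 n) v = ∑ u : Fin n, mu0 n v u := rfl
  rw [hm]
  unfold Dfun
  split_ifs at h2 ⊢ <;> omega

lemma Dfun_inj (n : ℕ) (hn : 4 ≤ n) {k l : ℕ} (hk : k < n) (hl : l < n)
    (h : Dfun n k = Dfun n l) : k = l := by
  unfold Dfun at h
  split_ifs at h <;> omega

lemma mdeg_mu1 (n : ℕ) (v : Fin n) :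
    mdeg (mu1 n) v + mdeg (mu0 n) v + 2 = 2 * n := by
  have e1 : ∀ u : Fin n, mu1 n v u + mu0 n v u + (if u = v then 2 else 0) = 2 := by
    intro u
    by_cases h : u = v
    · subst h; simp [mu1, mu0]
    · have h' : ¬ v = u := fun hh => h hh.symm
      have hle := mu0_le_two n v u
      rw [if_neg h, mu1, if_neg h']
      omega
  have h2 : (∑ u : Fin n, mu1 n v u) + (∑ u : Fin n, mu0 n v u)
      + (∑ u : Fin n, if u = v then 2 else 0) = ∑ u : Fin n, (2 : ℕ) := by
    rw [← Finset.sum_add_distrib, ← Finset.sum_add_distrib]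
    exact Finset.sum_congr rfl (fun u _ => e1 u)
  rw [Finset.sum_ite_eq' Finset.univ v (fun _ => (2:ℕ)), if_pos (Finset.mem_univ v),
    Finset.sum_const, Finset.card_univ, Fintype.card_fin, smul_eq_mul] at h2
  have hm0 : mdeg (mu0 n) v = ∑ u : Fin n, mu0 n v u := rfl
  have hm1 : mdeg (mu1 n) v = ∑ u : Fin n, mu1 n v u := rfl
  omega

theorem lir_decomp_big (n : ℕ) (hn : 4 ≤ n) :
    ∃ μs : Fin 2 → Fin n → Fin n → ℕ, IsLirDecomp (⊤ : SimpleGraph (Fin n)) 2 μs := by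
  refine ⟨![mu0 n, mu1 n], ?_, ?_, ?_, ?_⟩
  · intro i v w
    fin_cases i
    · exact mu0_symm n v w
    · show mu1 n v w = mu1 n w v
      unfold mu1
      by_cases h : v = w
      · simp [h]
      · rw [if_neg h, if_neg (Ne.symm h), mu0_symm]
  · intro i v w hpos
    have hvw : v ≠ w := by
      intro he; subst he
      fin_cases i <;> simp [mu0, mu1] at hpos
    simpa [SimpleGraph.top_adj] using hvw
  · intro v w hadj
    have hvw : v ≠ w := hadj.ne
    rw [Fin.sum_univ_two]
    show mu0 n v w + mu1 n v w = 2
    have hle := mu0_le_two n v w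
    rw [mu1, if_neg hvw]
    omega
  · intro i
    have hinj : ∀ v w : Fin n, v ≠ w → mdeg (mu0 n) v ≠ mdeg (mu0 n) w := by
      intro v w hvw h
      rw [mdeg_mu0 n (by omega) v, mdeg_mu0 n (by omega) w] at h
      exact hvw (Fin.ext (Dfun_inj n hn v.isLt w.isLt h))
    fin_cases i
    · intro v w hpos
      have hvw : v ≠ w := by
        intro he; subst he; simp [mu0] at hpos
      exact hinj v w hvw
    · intro v w hpos
      show mdeg (mu1 n) v ≠ mdeg (mu1 n) w
      have hvw : v ≠ w := by
        intro he; subst he; simp [mu1] at hpos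
      intro h
      have h0 := mdeg_mu1 n v
      have h1 := mdeg_mu1 n w
      exact hinj v w hvw (by omega)

theorem lir_decomp_three :
    ∃ μs : Fin 2 → Fin 3 → Fin 3 → ℕ, IsLirDecomp (⊤ : SimpleGraph (Fin 3)) 2 μs := by
  refine ⟨![![![0,2,1],![2,0,0],![1,0,0]], ![![0,0,1],![0,0,2],![1,2,0]]], ?_⟩
  refine ⟨by decide, by decide, by decide, ?_⟩
  unfold MulLocIrreg
  decide

/-- For every complete graph `K n` with `n ≥ 3`, the 2-multigraph `²Kₙ` obtained by
doubling every edge decomposes into at most 2 locally irregular submultigraphs. -/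
theorem lir_doubled_complete_le_two (n : ℕ) (hn : 3 ≤ n) :
    ∃ μs : Fin 2 → Fin n → Fin n → ℕ, IsLirDecomp (⊤ : SimpleGraph (Fin n)) 2 μs := by
  rcases eq_or_lt_of_le hn with h | h
  · subst h
    exact lir_decomp_three
  · exact lir_decomp_big n (by omega)
end

section
/- For every complete bipartite graph K_{p,q} with p, q ≥ 1 and (p, q) ≠ (1, 1) (so that K_{p,q} is connected and not isomorphic to K_2), the 2-multigraph ²K_{p,q} obtained from K_{p,q} by doubling every edge admits a decomposition into at most 2 locally irregular submultigraphs, i.e. lir(²K_{p,q}) ≤ 2. -/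
lemma sum_fin_ite_zero (n c d : ℕ) (hn : 0 < n) :
    ∑ a : Fin n, (if (a : ℕ) = 0 then c else d) = c + (n - 1) * d := by
  rw [Finset.sum_ite]
  have h1 : Finset.univ.filter (fun a : Fin n => (a : ℕ) = 0) = {(⟨0, hn⟩ : Fin n)} := by
    ext a; simp [Fin.ext_iff]
  have h2 : Finset.univ.filter (fun a : Fin n => ¬(a : ℕ) = 0) =
      Finset.univ \ {(⟨0, hn⟩ : Fin n)} := by
    ext a; simp [Fin.ext_iff]
  rw [h1, h2, Finset.sum_const, Finset.sum_const,
    Finset.card_sdiff_of_subset (by simp), Finset.card_singleton]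
  simp [mul_comm]

/-- First part, equal case. -/
def muA (p : ℕ) : (Fin p ⊕ Fin p) → (Fin p ⊕ Fin p) → ℕ
  | Sum.inl a, Sum.inr _ => if (a : ℕ) = 0 then 2 else 1
  | Sum.inr _, Sum.inl a => if (a : ℕ) = 0 then 2 else 1
  | _, _ => 0

/-- Second part, equal case. -/
def muB (p : ℕ) : (Fin p ⊕ Fin p) → (Fin p ⊕ Fin p) → ℕ
  | Sum.inl a, Sum.inr _ => if (a : ℕ) = 0 then 0 else 1
  | Sum.inr _, Sum.inl a => if (a : ℕ) = 0 then 0 else 1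
  | _, _ => 0

/-- Doubled multiplicity, unequal case. -/
def dbl (p q : ℕ) : (Fin p ⊕ Fin q) → (Fin p ⊕ Fin q) → ℕ
  | Sum.inl _, Sum.inr _ => 2
  | Sum.inr _, Sum.inl _ => 2
  | _, _ => 0

/-- For every complete bipartite graph `K p q` with `p, q ≥ 1` and `(p, q) ≠ (1, 1)`,
the 2-multigraph `²K_{p,q}` obtained by doubling every edge decomposes into at most 2
locally irregular submultigraphs. -/
theorem lir_doubled_completeBipartite_le_two (p q : ℕ) (hp : 1 ≤ p) (hq : 1 ≤ q)
    (hpq : ¬(p = 1 ∧ q = 1)) :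
    ∃ μs : Fin 2 → (Fin p ⊕ Fin q) → (Fin p ⊕ Fin q) → ℕ,
      IsLirDecomp (completeBipartiteGraph (Fin p) (Fin q)) 2 μs := by
  by_cases hpq' : p = q
  · -- p = q ≥ 2
    subst hpq'
    have hp2 : 2 ≤ p := by omega
    have hdAl : ∀ a : Fin p, mdeg (muA p) (Sum.inl a) = if (a : ℕ) = 0 then 2 * p else p := by
      intro a
      rw [mdeg, Fintype.sum_sum_type]
      simp only [muA]
      rw [Finset.sum_const, Finset.sum_const]
      simp only [Finset.card_univ, Fintype.card_fin, smul_eq_mul, mul_zero, zero_add]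
      split <;> omega
    have hdAr : ∀ b : Fin p, mdeg (muA p) (Sum.inr b) = p + 1 := by
      intro b
      rw [mdeg, Fintype.sum_sum_type]
      simp only [muA]
      rw [Finset.sum_const, sum_fin_ite_zero p 2 1 (by omega)]
      simp; omega
    have hdBl : ∀ a : Fin p, mdeg (muB p) (Sum.inl a) = if (a : ℕ) = 0 then 0 else p := by
      intro a
      rw [mdeg, Fintype.sum_sum_type]
      simp only [muB]
      rw [Finset.sum_const, Finset.sum_const]
      simp only [Finset.card_univ, Fintype.card_fin, smul_eq_mul, mul_zero, zero_add]
      split <;> omega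
    have hdBr : ∀ b : Fin p, mdeg (muB p) (Sum.inr b) = p - 1 := by
      intro b
      rw [mdeg, Fintype.sum_sum_type]
      simp only [muB]
      rw [Finset.sum_const, sum_fin_ite_zero p 0 1 (by omega)]
      simp
    have hIA : MulLocIrreg (muA p) := by
      intro v w hvw
      rcases v with a | b <;> rcases w with a' | b'
      · simp [muA] at hvw
      · rw [hdAl, hdAr]; split <;> omega
      · rw [hdAl, hdAr]; intro h; revert h; split <;> omega
      · simp [muA] at hvw
    have hIB : MulLocIrreg (muB p) := by
      intro v w hvw
      rcases v with a | b <;> rcases w with a' | b'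
      · simp [muB] at hvw
      · have ha : ¬ (a : ℕ) = 0 := by intro h; simp [muB, h] at hvw
        rw [hdBl, hdBr]; simp [ha]; omega
      · have ha : ¬ (a' : ℕ) = 0 := by intro h; simp [muB, h] at hvw
        rw [hdBl, hdBr]; simp [ha]; omega
      · simp [muB] at hvw
    refine ⟨![muA p, muB p], ?_, ?_, ?_, ?_⟩
    · intro i v w
      fin_cases i <;> rcases v with a | b <;> rcases w with a' | b' <;> simp [muA, muB]
    · intro i v w h
      fin_cases i <;> rcases v with a | b <;> rcases w with a' | b' <;>
        simp_all [muA, muB]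
    · intro v w h
      rw [Fin.sum_univ_two]
      rcases v with a | b <;> rcases w with a' | b' <;>
        simp_all [muA, muB] <;> split <;> simp
    · intro i
      fin_cases i
      · exact hIA
      · exact hIB
  · -- p ≠ q : the doubled graph itself is locally irregular
    have hdAl : ∀ a : Fin p, mdeg (dbl p q) (Sum.inl a) = 2 * q := by
      intro a
      rw [mdeg, Fintype.sum_sum_type]
      simp [dbl, mul_comm]
    have hdAr : ∀ b : Fin q, mdeg (dbl p q) (Sum.inr b) = 2 * p := by
      intro b
      rw [mdeg, Fintype.sum_sum_type]
      simp [dbl, mul_comm]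
    have hIA : MulLocIrreg (dbl p q) := by
      intro v w hvw
      rcases v with a | b <;> rcases w with a' | b'
      · simp [dbl] at hvw
      · rw [hdAl, hdAr]; omega
      · rw [hdAl, hdAr]; omega
      · simp [dbl] at hvw
    refine ⟨![dbl p q, fun _ _ => 0], ?_, ?_, ?_, ?_⟩
    · intro i v w
      fin_cases i <;> rcases v with a | b <;> rcases w with a' | b' <;> simp [dbl]
    · intro i v w h
      fin_cases i <;> rcases v with a | b <;> rcases w with a' | b' <;> simp_all [dbl]
    · intro v w h
      rw [Fin.sum_univ_two]
      rcases v with a | b <;> rcases w with a' | b' <;> simp_all [dbl]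
    · intro i
      fin_cases i
      · exact hIA
      · intro v w hvw
        simp at hvw
end

section
/- Let G = (X, Y; E) be a connected bipartite graph. Then there exists a nonempty set S of vertices, any two of which are twins (i.e. all vertices of S have the same neighbourhood), such that the graph obtained from G by deleting S ∪ N(S) is connected (or empty), where N(S) is the union of the neighbourhoods of the vertices of S. -/
/-!
Fix a root `r` and let `v` be a vertex at maximum distance `d` from `r` whose neighbourhood is
minimal among the vertices at distance `d`; take `S` to be the set of twins of `v`, so that
`N(S) = N(v)`. In a bipartite graph adjacent vertices have distances from `r` of different
parity, so a vertex at distance `d` has all its neighbours strictly closer to `r`. Every surviving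
vertex `w ≠ r` then has a surviving neighbour closer to `r`: its neighbour on a shortest path to
`r` works unless that neighbour lies in `N(v)`, in which case `w` is at distance `d` and, by the
minimality of `N(v)`, has a neighbour outside `N(v)`. Descending along such neighbours connects
every surviving vertex to `r` inside the remaining graph.
-/

namespace SimpleGraph

variable {V : Type*} {G : SimpleGraph V}

lemma Coloring.dist_ne_of_adj (c : G.Coloring Bool) {u v w : V} (hreach : G.Reachable u v)
    (hadj : G.Adj v w) : G.dist u v ≠ G.dist u w := by
  intro heq
  obtain ⟨p, hp⟩ := hreach.exists_walk_length_eq_dist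
  obtain ⟨q, hq⟩ := (hreach.trans hadj.reachable).exists_walk_length_eq_dist
  have hcolor := c.valid hadj
  have hp' := c.even_length_iff_congr p
  have hq' := c.even_length_iff_congr q
  rw [hp, heq, ← hq] at hp'
  revert hcolor hp' hq'
  cases c u <;> cases c v <;> cases c w <;> simp

lemma Adj.dist_le_dist_add_one {u v : V} (h : G.Adj u v) (r : V) :
    G.dist r v ≤ G.dist r u + 1 := by
  rcases h.diff_dist_adj (u := r) with h | h | h <;> omega

lemma Reachable.exists_adj_dist_add_one_eq {r w : V} (h : G.Reachable r w) (hw : w ≠ r) :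
    ∃ u, G.Adj u w ∧ G.dist r u + 1 = G.dist r w := by
  obtain ⟨p, hp⟩ := h.exists_walk_length_eq_dist
  have hnil : ¬ p.Nil := fun hn => hw hn.eq.symm
  have hadj := p.adj_penultimate hnil
  refine ⟨p.penultimate, hadj, le_antisymm ?_ (hadj.dist_le_dist_add_one r)⟩
  have hlen := congrArg Walk.length (p.concat_dropLast hadj)
  rw [Walk.length_concat] at hlen
  have := dist_le p.dropLast
  omega

lemma Coloring.dist_lt_of_adj_of_forall_dist_le (c : G.Coloring Bool) (hG : G.Connected)
    {r v u : V} (hmax : ∀ x, G.dist r x ≤ G.dist r v) (hadj : G.Adj v u) :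
    G.dist r u < G.dist r v :=
  lt_of_le_of_ne (hmax u) (c.dist_ne_of_adj (hG r v) hadj).symm

lemma exists_reachable_induce_of_exists_adj_lt {R : Set V} {r : V} (f : V → ℕ)
    (h : ∀ w ∈ R, w ≠ r → ∃ u ∈ R, G.Adj w u ∧ f u < f w) (w : V) (hw : w ∈ R) :
    ∃ hr : r ∈ R, (G.induce R).Reachable ⟨w, hw⟩ ⟨r, hr⟩ := by
  induction hn : f w using Nat.strong_induction_on generalizing w with
  | _ n ih =>
    by_cases hwr : w = r
    · subst hwr
      exact ⟨hw, .rfl⟩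
    obtain ⟨u, hu, hwu, hlt⟩ := h w hw hwr
    obtain ⟨hr, hreach⟩ := ih (f u) (hn ▸ hlt) u hu rfl
    exact ⟨hr, (show (G.induce R).Adj ⟨w, hw⟩ ⟨u, hu⟩ from hwu).reachable.trans hreach⟩

lemma induce_connected_of_exists_adj_lt {R : Set V} (hR : R.Nonempty) (r : V) (f : V → ℕ)
    (h : ∀ w ∈ R, w ≠ r → ∃ u ∈ R, G.Adj w u ∧ f u < f w) : (G.induce R).Connected := by
  obtain ⟨x, hx⟩ := hR
  obtain ⟨hr, -⟩ := exists_reachable_induce_of_exists_adj_lt f h x hx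
  have : Nonempty R := ⟨⟨r, hr⟩⟩
  exact Connected.mk fun ⟨a, ha⟩ ⟨b, hb⟩ =>
    (exists_reachable_induce_of_exists_adj_lt f h a ha).2.trans
      (exists_reachable_induce_of_exists_adj_lt f h b hb).2.symm

lemma exists_forall_dist_le_and_minimal_neighborSet [Finite V] (r : V) :
    ∃ v, (∀ u, G.dist r u ≤ G.dist r v) ∧ ∀ u, G.dist r u = G.dist r v →
      G.neighborSet u ⊆ G.neighborSet v → G.neighborSet u = G.neighborSet v := by
  have : Nonempty V := ⟨r⟩
  obtain ⟨w, hw⟩ := Finite.exists_max (G.dist r)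
  have : Nonempty {u // G.dist r u = G.dist r w} := ⟨⟨w, rfl⟩⟩
  obtain ⟨⟨v, hv⟩, hmin⟩ :=
    Finite.exists_min fun u : {u // G.dist r u = G.dist r w} => (G.neighborSet u).ncard
  exact ⟨v, hv ▸ hw, fun u hu hsub =>
    Set.eq_of_subset_of_ncard_le hsub (hmin ⟨u, hu.trans hv⟩) (Set.toFinite _)⟩

lemma Coloring.exists_adj_dist_lt_of_not_twin (c : G.Coloring Bool) (hG : G.Connected)
    {r v w : V} (hmax : ∀ x, G.dist r x ≤ G.dist r v)
    (hmin : ∀ u, G.dist r u = G.dist r v →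
      G.neighborSet u ⊆ G.neighborSet v → G.neighborSet u = G.neighborSet v)
    (hwS : G.neighborSet w ≠ G.neighborSet v) (hwN : ¬ G.Adj v w) (hwr : w ≠ r) :
    ∃ u, (G.neighborSet u ≠ G.neighborSet v ∧ ¬ G.Adj v u) ∧
      G.Adj w u ∧ G.dist r u < G.dist r w := by
  have not_twin : ∀ u, G.Adj w u → G.neighborSet u ≠ G.neighborSet v := fun u hwu he =>
    hwN (he ▸ hwu.symm : w ∈ G.neighborSet v)
  obtain ⟨u₀, hu₀w, hu₀⟩ := (hG r w).exists_adj_dist_add_one_eq hwr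
  by_cases hvu₀ : G.Adj v u₀
  · have hwd : G.dist r w = G.dist r v := by
      have := c.dist_lt_of_adj_of_forall_dist_le hG hmax hvu₀
      have := hvu₀.symm.dist_le_dist_add_one r
      omega
    obtain ⟨u, hwu, hvu⟩ := Set.not_subset.1 fun hsub => hwS (hmin w hwd hsub)
    exact ⟨u, ⟨not_twin u hwu, hvu⟩, hwu,
      c.dist_lt_of_adj_of_forall_dist_le hG (hwd ▸ hmax) hwu⟩
  · exact ⟨u₀, ⟨not_twin u₀ hu₀w.symm, hvu₀⟩, hu₀w.symm, by omega⟩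

end SimpleGraph

/-- **Twins lemma.** Let `G = (X, Y; E)` be a connected bipartite graph. Then there is
a nonempty set `S` of vertices, any two of which are twins (have the same
neighbourhood), such that deleting `S ∪ N(S)` from `G` leaves a connected (or empty)
graph, where `N(S)` is the union of the neighbourhoods of the vertices of `S`. -/
theorem exists_twins_del_connected {V : Type*} [Fintype V] (G : SimpleGraph V)
    (X Y : Set V) (hpart : ∀ v, v ∈ X ↔ v ∉ Y)
    (hbip : ∀ u v, G.Adj u v → (u ∈ X ↔ v ∈ Y))
    (hconn : G.Connected) :
    ∃ S : Set V, S.Nonempty ∧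
      (∀ x ∈ S, ∀ y ∈ S, G.neighborSet x = G.neighborSet y) ∧
      (((S ∪ ⋃ s ∈ S, G.neighborSet s)ᶜ : Set V) = ∅ ∨
        (SimpleGraph.induce ((S ∪ ⋃ s ∈ S, G.neighborSet s)ᶜ : Set V) G).Connected) := by
  classical
  obtain ⟨r⟩ := hconn.nonempty
  let c : G.Coloring Bool := SimpleGraph.Coloring.mk (fun u => decide (u ∈ X)) fun {a b} hab => by
    have := hbip a b hab
    have := hpart b
    simp only [ne_eq, decide_eq_decide]
    tauto
  obtain ⟨v, hmax, hmin⟩ := G.exists_forall_dist_le_and_minimal_neighborSet r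
  set S : Set V := {u | G.neighborSet u = G.neighborSet v}
  have hNS : (⋃ s ∈ S, G.neighborSet s) = G.neighborSet v := by
    ext x
    simp only [Set.mem_iUnion, exists_prop]
    exact ⟨fun ⟨s, hs, hx⟩ => hs ▸ hx, fun hx => ⟨v, rfl, hx⟩⟩
  refine ⟨S, ⟨v, rfl⟩, fun x hx y hy => hx.trans hy.symm, ?_⟩
  rw [hNS]
  refine (Set.eq_empty_or_nonempty _).imp id fun hR =>
    SimpleGraph.induce_connected_of_exists_adj_lt hR r (G.dist r) fun w hw hwr => ?_
  simp only [Set.mem_compl_iff, Set.mem_union, SimpleGraph.mem_neighborSet, not_or] at hw ⊢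
  exact c.exists_adj_dist_lt_of_not_twin hconn hmax hmin hw.1 hw.2 hwr
end

section
/- Let G = (X, Y; E) be a connected bipartite graph in which the part X has an even number of vertices. Then the 2-multigraph ²G admits a decomposition into two multigraphs (a red one μ_r and a blue one μ_b with μ_r(e) + μ_b(e) = 2 for every edge e) such that every vertex of X has odd degree in both the red and the blue multigraph, and every vertex of Y has even degree in both the red and the blue multigraph; in particular both multigraphs are locally irregular. -/
namespace SimpleGraph

variable {V : Type*}

def edgeChains (G : SimpleGraph V) : Submodule (ZMod 2) (Sym2 V → ZMod 2) where
  carrier := {F | Function.support F ⊆ G.edgeSet}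
  add_mem' hF hF' := (Function.support_add _ _).trans (Set.union_subset hF hF')
  zero_mem' := by simp
  smul_mem' c _ hF := (Function.support_const_smul_subset c _).trans hF

def chainMult (G : SimpleGraph V) [DecidableRel G.Adj] (m : ZMod 2 → ℕ) (F : Sym2 V → ZMod 2)
    (v w : V) : ℕ :=
  if G.Adj v w then m (F s(v, w)) else 0

section Boundary

variable [Fintype V]

def boundary : (Sym2 V → ZMod 2) →ₗ[ZMod 2] V → ZMod 2 :=
  LinearMap.pi fun v => ∑ u, LinearMap.proj s(v, u)

@[simp]
theorem boundary_apply (F : Sym2 V → ZMod 2) (v : V) : boundary F v = ∑ u, F s(v, u) := by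
  simp [boundary]

variable [DecidableEq V] {G : SimpleGraph V}

theorem boundary_single_edge {a c : V} (hac : a ≠ c) :
    boundary (Pi.single s(a, c) 1) = Pi.single a 1 + Pi.single c 1 := by
  ext v
  simp only [boundary_apply, Pi.single_apply, Pi.add_apply, Sym2.eq_iff]
  by_cases hva : v = a <;> by_cases hvc : v = c <;> simp_all

theorem Walk.single_add_single_mem_map_boundary {a b : V} (p : G.Walk a b) :
    Pi.single a 1 + Pi.single b 1 ∈ G.edgeChains.map boundary := by
  induction p with
  | nil => exact ⟨0, zero_mem _, by rw [map_zero, ZModModule.add_self]⟩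
  | @cons a c b h p ih =>
    have hedge : Pi.single a 1 + Pi.single c 1 ∈ G.edgeChains.map boundary :=
      ⟨Pi.single s(a, c) 1, fun e he => by
        obtain rfl : e = s(a, c) := by by_contra hne; simp [hne] at he
        exact h, boundary_single_edge h.ne⟩
    simpa only [ZModModule.add_add_add_cancel] using add_mem hedge ih

theorem Connected.mem_map_boundary (hG : G.Connected) {t : V → ZMod 2} (ht : ∑ v, t v = 0) :
    t ∈ G.edgeChains.map boundary := by
  obtain ⟨r⟩ := hG.nonempty
  have ht_eq : t = ∑ x, t x • (Pi.single x 1 + Pi.single r 1) := by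
    ext v
    simp [Finset.sum_apply, Pi.single_apply, Finset.sum_add_distrib, ht]
  rw [ht_eq]
  exact Submodule.sum_mem _ fun x _ =>
    Submodule.smul_mem _ _ (hG.preconnected x r).some.single_add_single_mem_map_boundary

end Boundary

section ChainMult

variable {G : SimpleGraph V} [DecidableRel G.Adj]

theorem chainMult_comm (m : ZMod 2 → ℕ) (F : Sym2 V → ZMod 2) (v w : V) :
    G.chainMult m F v w = G.chainMult m F w v := by
  simp only [chainMult, G.adj_comm, Sym2.eq_swap]

theorem adj_of_chainMult_pos {m : ZMod 2 → ℕ} {F : Sym2 V → ZMod 2} {v w : V}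
    (h : 0 < G.chainMult m F v w) : G.Adj v w := by
  by_contra hvw
  simp [chainMult, hvw] at h

theorem chainMult_add_chainMult {m m' : ZMod 2 → ℕ} (hm : ∀ x, m x + m' x = 2)
    (F : Sym2 V → ZMod 2) {v w : V} (h : G.Adj v w) :
    G.chainMult m F v w + G.chainMult m' F v w = 2 := by
  simp only [chainMult, if_pos h, hm]

theorem natCast_mdeg_chainMult [Fintype V] {m : ZMod 2 → ℕ} (hm : ∀ x, (m x : ZMod 2) = 1 + x)
    {F : Sym2 V → ZMod 2} (hF : F ∈ G.edgeChains) (v : V) :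
    (mdeg (G.chainMult m F) v : ZMod 2) = G.degree v + boundary F v := by
  have hterm : ∀ u, (G.chainMult m F v u : ZMod 2) = (if G.Adj v u then 1 else 0) + F s(v, u) := by
    intro u
    by_cases h : G.Adj v u
    · simp [chainMult, h, hm]
    · simp [chainMult, h, Function.notMem_support.1 fun h' => h (G.mem_edgeSet.1 (hF h'))]
  simp only [mdeg, Nat.cast_sum, hterm, Finset.sum_add_distrib, Finset.sum_boole, boundary_apply,
    ← neighborFinset_eq_filter, card_neighborFinset_eq_degree]

theorem sum_degrees_zmod_two_eq_zero [Fintype V] : ∑ v, (G.degree v : ZMod 2) = 0 := by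
  rw [← Nat.cast_sum, sum_degrees_eq_twice_card_edges,
    ZMod.natCast_eq_zero_iff_even.2 (even_two_mul _)]

end ChainMult

theorem mulLocIrreg_of_odd_mdeg_iff [Fintype V] {G : SimpleGraph V} {s : Set V}
    (hs : ∀ v w, G.Adj v w → (v ∈ s ↔ w ∉ s)) {μ : V → V → ℕ}
    (hμ : ∀ v w, 0 < μ v w → G.Adj v w) (hodd : ∀ v, Odd (mdeg μ v) ↔ v ∈ s) :
    MulLocIrreg μ := fun v w hvw hdeg => by
  have := hs v w (hμ v w hvw)
  rw [← hodd, ← hodd, hdeg] at this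
  exact iff_not_self this

end SimpleGraph

open SimpleGraph in
/-- Let `G = (X, Y; E)` be a connected bipartite graph whose part `X` has an even
number of vertices. Then `²G` decomposes into a red multigraph `μr` and a blue
multigraph `μb` (with `μr e + μb e = 2` on every edge of `G`) such that every vertex
of `X` has odd red and blue degree and every vertex of `Y` has even red and blue
degree; in particular both multigraphs are locally irregular. -/
theorem doubled_bipartite_even_part_decomp {V : Type*} [Fintype V] [DecidableEq V]
    (G : SimpleGraph V) (X Y : Finset V) (hpart : ∀ v, v ∈ X ↔ v ∉ Y)
    (hbip : ∀ u v, G.Adj u v → (u ∈ X ↔ v ∈ Y))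
    (hconn : G.Connected) (heven : Even X.card) :
    ∃ μr μb : V → V → ℕ,
      (∀ v w, μr v w = μr w v) ∧ (∀ v w, μb v w = μb w v) ∧
      (∀ v w, 0 < μr v w → G.Adj v w) ∧ (∀ v w, 0 < μb v w → G.Adj v w) ∧
      (∀ v w, G.Adj v w → μr v w + μb v w = 2) ∧
      (∀ v ∈ X, Odd (mdeg μr v) ∧ Odd (mdeg μb v)) ∧
      (∀ v ∈ Y, Even (mdeg μr v) ∧ Even (mdeg μb v)) ∧
      MulLocIrreg μr ∧ MulLocIrreg μb := by
  classical
  have hX : ∀ v w, G.Adj v w → (v ∈ X ↔ w ∉ X) := fun v w h =>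
    (hbip v w h).trans (iff_not_comm.1 (hpart w))
  set t : V → ZMod 2 := fun v => G.degree v + if v ∈ X then 1 else 0
  have ht : ∑ v, t v = 0 := by
    simp only [t, Finset.sum_add_distrib, sum_degrees_zmod_two_eq_zero, Finset.sum_boole,
      Finset.filter_mem_eq_inter, Finset.univ_inter, ZMod.natCast_eq_zero_iff_even.2 heven,
      add_zero]
  obtain ⟨F, hF, hFt⟩ := hconn.mem_map_boundary ht
  have hodd : ∀ m : ZMod 2 → ℕ, (∀ x, (m x : ZMod 2) = 1 + x) →
      ∀ v, Odd (mdeg (G.chainMult m F) v) ↔ v ∈ X := by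
    intro m hm v
    rw [← ZMod.natCast_eq_one_iff_odd, natCast_mdeg_chainMult hm hF, hFt, ← add_assoc,
      CharTwo.add_self_eq_zero, zero_add]
    split_ifs with hv <;> simp [hv]
  have hr := hodd (fun x => 1 + x.val) fun x => by push_cast; rw [ZMod.natCast_zmod_val]
  have hb := hodd (fun x => (1 + x).val) fun x => ZMod.natCast_zmod_val _
  have hY : ∀ v ∈ Y, v ∉ X := fun v hvY hvX => (hpart v).1 hvX hvY
  refine ⟨_, _, chainMult_comm _ _, chainMult_comm _ _, fun _ _ => adj_of_chainMult_pos,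
    fun _ _ => adj_of_chainMult_pos, fun _ _ => chainMult_add_chainMult (by decide) F,
    fun v hv => ⟨(hr v).2 hv, (hb v).2 hv⟩,
    fun v hv => ⟨Nat.not_odd_iff_even.1 ((hr v).not.2 (hY v hv)),
      Nat.not_odd_iff_even.1 ((hb v).not.2 (hY v hv))⟩,
    mulLocIrreg_of_odd_mdeg_iff hX (fun _ _ => adj_of_chainMult_pos) hr,
    mulLocIrreg_of_odd_mdeg_iff hX (fun _ _ => adj_of_chainMult_pos) hb⟩
end

section
/- For every tree T which is not isomorphic to K_2, the 2-multigraph ²T obtained from T by doubling every edge admits a decomposition into at most 2 locally irregular submultigraphs, i.e. lir(²T) ≤ 2. -/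
/-!
Label the edges of the tree over `ZMod 2`, and put an edge labelled `1` twice into part `0` and
any other edge once into each part. In both parts the degree of `v` then has the parity of
`deg v` plus the sum of the labels at `v`. In a tree, every `τ : V → ZMod 2` with `∑ τ = 0` is
the vertex sum of an edge labelling: label `vu` by the sum of `τ` over the component of `u` in
`T - vu`. Choosing `τ = deg + c` for a proper 2-colouring `c` makes the degree parities in both
parts equal to `c`, so both parts are locally irregular; this needs `∑ c = 0`. If `∑ c = 1`, add
`1` to `τ` at a leaf `ℓ` with `c ℓ = 1`: its edge `ℓb` is then doubled in part `0` and absent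
from part `1`, and in part `0` the leaf has degree `2` while `b` has degree at least `3`, as long
as `b` is not a leaf itself, i.e. `T` is not `K₂`.
-/

open Finset SimpleGraph

namespace SimpleGraph

variable {V : Type*} {T : SimpleGraph V}

lemma Connected.exists_adj_dist_lt (hT : T.Connected) {x v : V} (hne : x ≠ v) :
    ∃ u, T.Adj v u ∧ T.dist x u < T.dist x v := by
  obtain ⟨p, -, hp⟩ := hT.exists_path_of_dist x v
  have hnil : ¬p.Nil := fun h => hne h.eq
  refine ⟨p.penultimate, (p.adj_penultimate hnil).symm, ?_⟩
  have hlen := p.length_dropLast_add_one hnil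
  have := dist_le p.dropLast
  omega

lemma IsTree.eq_penultimate_of_adj_of_dist_lt (hT : T.IsTree) {x v u : V} {p : T.Walk x v}
    (hp : p.IsPath) (hadj : T.Adj v u) (hlt : T.dist x u < T.dist x v) : u = p.penultimate := by
  classical
  obtain ⟨q, hq, hql⟩ := hT.connected.exists_path_of_dist x u
  have hv : v ∉ q.support := fun hv => by
    have := dist_le (q.takeUntil v hv)
    have := q.length_takeUntil_le_length hv
    omega
  exact hT.isAcyclic.eq_penultimate_of_adj_end hp hadj
    (hT.isAcyclic.mem_support_of_ne_mem_support_of_adj_of_isPath hp hq hadj hv)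

lemma IsTree.card_filter_adj_dist_lt_eq_one [Fintype V] [DecidableRel T.Adj] (hT : T.IsTree)
    {x v : V} (hne : x ≠ v) : #{u | T.Adj v u ∧ T.dist x u < T.dist x v} = 1 := by
  obtain ⟨p, hp, -⟩ := hT.connected.exists_path_of_dist x v
  obtain ⟨u, hu⟩ := hT.connected.exists_adj_dist_lt hne
  rw [card_eq_one_iff_existsUnique]
  refine ⟨u, by simpa using hu, fun w hw => ?_⟩
  simp only [mem_filter, mem_univ, true_and] at hw
  rw [hT.eq_penultimate_of_adj_of_dist_lt hp hw.1 hw.2,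
    hT.eq_penultimate_of_adj_of_dist_lt hp hu.1 hu.2]

lemma IsTree.cast_dist_ne_of_adj (hT : T.IsTree) (x : V) {v w : V} (hadj : T.Adj v w) :
    (T.dist x v : ZMod 2) ≠ T.dist x w := by
  rcases hT.dist_eq_dist_add_one_of_adj x hadj with h | h <;> simp [h]

lemma neighborFinset_eq_singleton_of_degree_eq_one {v w : V} [Fintype (T.neighborSet v)]
    (h : T.degree v = 1) (hadj : T.Adj v w) : T.neighborFinset v = {w} := by
  obtain ⟨x, hx⟩ := card_eq_one.mp ((T.card_neighborFinset_eq_degree v).trans h)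
  obtain rfl : w = x := by simpa [hx] using (mem_neighborFinset T v w).mpr hadj
  exact hx

lemma Connected.nonempty_iso_top_of_neighborFinset_eq [Fintype V] [DecidableRel T.Adj]
    (hT : T.Connected) {a b : V} (ha : T.neighborFinset a = {b}) (hb : T.neighborFinset b = {a}) :
    Nonempty (T ≃g (⊤ : SimpleGraph (Fin 2))) := by
  classical
  have hab : T.Adj a b := (mem_neighborFinset T a b).mp (ha ▸ mem_singleton_self b)
  have hmem (x : V) : x = a ∨ x = b := by
    by_contra! hx
    obtain ⟨u, hau, hu⟩ := hT.exists_adj_dist_lt hx.1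
    obtain ⟨u', hbu', hu'⟩ := hT.exists_adj_dist_lt hx.2
    obtain rfl : u = b := by simpa [ha] using (mem_neighborFinset T a u).mpr hau
    obtain rfl : u' = a := by simpa [hb] using (mem_neighborFinset T u u').mpr hbu'
    omega
  have hcard : Fintype.card V = 2 := by
    rw [← card_univ, ← (eq_univ_iff_forall (s := {a, b})).mpr (by simpa using hmem),
      card_pair hab.ne]
  let e := Fintype.equivFinOfCardEq hcard
  refine ⟨⟨e, fun {x y} => ?_⟩⟩
  rw [top_adj, e.injective.ne_iff]
  rcases hmem x with rfl | rfl <;> rcases hmem y with rfl | rfl <;>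
    simp [hab, hab.symm, hab.ne, hab.ne.symm]

section Split

def splitMult (T : SimpleGraph V) [DecidableRel T.Adj] (s : V → V → ZMod 2) (i : Fin 2)
    (v u : V) : ℕ :=
  if T.Adj v u then (if s v u = 1 then (if i = 0 then 2 else 0) else 1) else 0

variable [DecidableRel T.Adj] {s : V → V → ZMod 2}

lemma splitMult_comm (hs : ∀ v u, T.Adj v u → s v u = s u v) (i : Fin 2) (v u : V) :
    splitMult T s i v u = splitMult T s i u v := by
  by_cases hadj : T.Adj v u
  · simp [splitMult, hadj, hadj.symm, hs v u hadj]
  · have hadj' : ¬T.Adj u v := fun h => hadj h.symm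
    simp [splitMult, hadj, hadj']

lemma adj_of_splitMult_pos {i : Fin 2} {v u : V} (h : 0 < splitMult T s i v u) : T.Adj v u := by
  by_contra hadj
  simp [splitMult, hadj] at h

lemma one_le_splitMult_zero {v u : V} (hadj : T.Adj v u) : 1 ≤ splitMult T s 0 v u := by
  by_cases h : s v u = 1 <;> simp [splitMult, hadj, h]

lemma sum_splitMult {v u : V} (hadj : T.Adj v u) : ∑ i, splitMult T s i v u = 2 := by
  by_cases h : s v u = 1 <;> simp [splitMult, hadj, h]

lemma cast_splitMult (i : Fin 2) (v u : V) :
    (splitMult T s i v u : ZMod 2) = if T.Adj v u then 1 + s v u else 0 := by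
  by_cases hadj : T.Adj v u
  · simp only [splitMult, if_pos hadj]
    generalize s v u = a
    revert a i
    decide
  · simp [splitMult, hadj]

variable [Fintype V]

lemma isLirDecomp_splitMult (hs : ∀ v u, T.Adj v u → s v u = s u v)
    (hirr : ∀ i, MulLocIrreg (splitMult T s i)) : IsLirDecomp T 2 (splitMult T s) :=
  ⟨splitMult_comm hs, fun _ _ _ => adj_of_splitMult_pos, fun _ _ => sum_splitMult, hirr⟩

lemma mdeg_splitMult (i : Fin 2) (v : V) :
    mdeg (splitMult T s i) v = ∑ u ∈ T.neighborFinset v, splitMult T s i v u :=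
  (sum_subset (subset_univ _) fun u _ hu => by simp_all [splitMult]).symm

lemma cast_mdeg_splitMult (i : Fin 2) (v : V) :
    (mdeg (splitMult T s i) v : ZMod 2) = T.degree v + ∑ u ∈ T.neighborFinset v, s v u := by
  simp_rw [mdeg, Nat.cast_sum, cast_splitMult, ← sum_filter, ← neighborFinset_eq_filter,
    sum_add_distrib, sum_const, card_neighborFinset_eq_degree, nsmul_eq_mul, mul_one]

lemma mdeg_splitMult_ne_of_leaf (hs : ∀ v u, T.Adj v u → s v u = s u v) {ℓ b : V}
    (hℓ : T.neighborFinset ℓ = {b}) (hb : 2 ≤ T.degree b) (hsℓ : s ℓ b = 1) {i : Fin 2} {w : V}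
    (hw : 0 < splitMult T s i ℓ w) : mdeg (splitMult T s i) ℓ ≠ mdeg (splitMult T s i) w := by
  have hℓb : T.Adj ℓ b := (mem_neighborFinset T ℓ b).mp (hℓ ▸ mem_singleton_self b)
  obtain rfl : w = b := by
    simpa [hℓ] using (mem_neighborFinset T ℓ w).mpr (adj_of_splitMult_pos hw)
  classical
  by_cases hi : i = 0
  · subst hi
    have hmℓ : mdeg (splitMult T s 0) ℓ = 2 := by
      simp [mdeg_splitMult, hℓ, splitMult, hℓb, hsℓ]
    have hℓw : ℓ ∈ T.neighborFinset w := (mem_neighborFinset T w ℓ).mpr hℓb.symm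
    have hwℓ : splitMult T s 0 w ℓ = 2 := by simp [splitMult, hℓb.symm, ← hs _ _ hℓb, hsℓ]
    have hrest := card_nsmul_le_sum ((T.neighborFinset w).erase ℓ)
      (fun u => splitMult T s 0 w u) 1 fun u hu =>
        one_le_splitMult_zero ((mem_neighborFinset T w u).mp (mem_of_mem_erase hu))
    rw [card_erase_of_mem hℓw, card_neighborFinset_eq_degree, smul_eq_mul, mul_one] at hrest
    rw [hmℓ, mdeg_splitMult, ← add_sum_erase _ _ hℓw, hwℓ]
    omega
  · simp [splitMult, hℓb, hsℓ, hi] at hw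

end Split

variable [Fintype V] {M : Type*} [AddCommMonoid M]

/-- For an edge `vu` of a tree, the vertices closer to `u` than to `v` form the component of `u`
in `T - vu`. -/
noncomputable def sideSum (T : SimpleGraph V) (τ : V → M) (v u : V) : M :=
  ∑ x with T.dist x u < T.dist x v, τ x

lemma IsTree.sideSum_add_sideSum (hT : T.IsTree) (τ : V → M) {v u : V} (hadj : T.Adj v u) :
    sideSum T τ v u + sideSum T τ u v = ∑ x, τ x := by
  rw [sideSum, sideSum, ← sum_filter_add_sum_filter_not univ (fun x => T.dist x u < T.dist x v)]
  congr 1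
  refine sum_congr (filter_congr fun x _ => ?_) fun _ _ => rfl
  rcases hT.dist_eq_dist_add_one_of_adj x hadj with h | h <;> omega

lemma IsTree.sum_sideSum_add (hT : T.IsTree) [DecidableRel T.Adj] (τ : V → M) (v : V) :
    ∑ u ∈ T.neighborFinset v, sideSum T τ v u + τ v = ∑ x, τ x := by
  classical
  have hcount : ∀ x, ∑ u ∈ T.neighborFinset v with T.dist x u < T.dist x v, τ x =
      if x = v then 0 else τ x := by
    intro x
    split_ifs with hx
    · subst hx
      simp
    · rw [sum_const, neighborFinset_eq_filter, filter_filter,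
        hT.card_filter_adj_dist_lt_eq_one hx, one_smul]
  simp_rw [sideSum, sum_filter]
  rw [sum_comm]
  simp_rw [← sum_filter, hcount]
  rw [← sum_erase_add _ _ (mem_univ v), if_pos rfl, add_zero, ← sum_erase_add _ τ (mem_univ v)]
  exact congrArg (· + τ v) (sum_congr rfl fun x hx => if_neg (ne_of_mem_erase hx))

lemma sum_degree_cast_zmod_two [DecidableRel T.Adj] : ∑ v, (T.degree v : ZMod 2) = 0 := by
  rw [← Nat.cast_sum, sum_degrees_eq_twice_card_edges, ZMod.natCast_eq_zero_iff]
  exact dvd_mul_right 2 _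

section ZModTwo

variable {τ : V → ZMod 2}

lemma IsTree.sideSum_comm (hT : T.IsTree) (hτ : ∑ x, τ x = 0) {v u : V} (hadj : T.Adj v u) :
    sideSum T τ v u = sideSum T τ u v :=
  CharTwo.add_eq_zero.mp (hτ ▸ hT.sideSum_add_sideSum τ hadj)

variable [DecidableRel T.Adj]

lemma IsTree.sum_sideSum (hT : T.IsTree) (hτ : ∑ x, τ x = 0) (v : V) :
    ∑ u ∈ T.neighborFinset v, sideSum T τ v u = τ v :=
  CharTwo.add_eq_zero.mp (hτ ▸ hT.sum_sideSum_add τ v)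

lemma IsTree.cast_mdeg_splitMult_sideSum (hT : T.IsTree) (hτ : ∑ x, τ x = 0) (i : Fin 2)
    (v : V) : (mdeg (splitMult T (sideSum T τ) i) v : ZMod 2) = T.degree v + τ v := by
  rw [cast_mdeg_splitMult, hT.sum_sideSum hτ]

end ZModTwo

variable [DecidableRel T.Adj] {c : V → ZMod 2}

lemma IsTree.exists_isLirDecomp_of_coloring (hT : T.IsTree) (hc : ∀ v w, T.Adj v w → c v ≠ c w)
    (hsum : ∑ v, c v = 0) : ∃ μs : Fin 2 → V → V → ℕ, IsLirDecomp T 2 μs := by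
  set τ : V → ZMod 2 := fun v => T.degree v + c v
  have hτ : ∑ v, τ v = 0 := by simp [τ, sum_add_distrib, sum_degree_cast_zmod_two, hsum]
  have hparity (i : Fin 2) (v : V) : (mdeg (splitMult T (sideSum T τ) i) v : ZMod 2) = c v := by
    rw [hT.cast_mdeg_splitMult_sideSum hτ, CharTwo.add_cancel_left]
  refine ⟨_, isLirDecomp_splitMult (fun _ _ => hT.sideSum_comm hτ) fun i v w hvw hdeg => ?_⟩
  exact hc v w (adj_of_splitMult_pos hvw) (by rw [← hparity i v, ← hparity i w, hdeg])

lemma IsTree.exists_isLirDecomp_of_coloring_of_leaf (hT : T.IsTree)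
    (hc : ∀ v w, T.Adj v w → c v ≠ c w) (hsum : ∑ v, c v = 1) {ℓ b : V}
    (hℓ : T.neighborFinset ℓ = {b}) (hb : 2 ≤ T.degree b) (hcℓ : c ℓ = 1) :
    ∃ μs : Fin 2 → V → V → ℕ, IsLirDecomp T 2 μs := by
  classical
  set τ : V → ZMod 2 := fun v => T.degree v + c v + (Pi.single ℓ 1 : V → ZMod 2) v
  have hτ : ∑ v, τ v = 0 := by
    simp [τ, sum_add_distrib, sum_degree_cast_zmod_two, hsum, CharTwo.add_self_eq_zero]
  have hs (v u : V) (hadj : T.Adj v u) := hT.sideSum_comm hτ hadj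
  have hparity (i : Fin 2) (v : V) (hv : v ≠ ℓ) :
      (mdeg (splitMult T (sideSum T τ) i) v : ZMod 2) = c v := by
    simp only [hT.cast_mdeg_splitMult_sideSum hτ, τ, Pi.single_eq_of_ne hv, add_zero,
      CharTwo.add_cancel_left]
  have hsℓ : sideSum T τ ℓ b = 1 := by
    have := hT.sum_sideSum hτ ℓ
    rw [hℓ, sum_singleton] at this
    rw [this]
    simp [τ, hcℓ, ← card_neighborFinset_eq_degree, hℓ, CharTwo.add_self_eq_zero]
  refine ⟨_, isLirDecomp_splitMult hs fun i v w hvw hdeg => ?_⟩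
  by_cases hv : v = ℓ
  · subst hv
    exact mdeg_splitMult_ne_of_leaf hs hℓ hb hsℓ hvw hdeg
  by_cases hw : w = ℓ
  · subst hw
    rw [splitMult_comm hs] at hvw
    exact mdeg_splitMult_ne_of_leaf hs hℓ hb hsℓ hvw hdeg.symm
  exact hc v w (adj_of_splitMult_pos hvw) (by rw [← hparity i v hv, ← hparity i w hw, hdeg])

end SimpleGraph

/-- For every tree `T` (connected acyclic graph) which is not isomorphic to `K₂`, the
2-multigraph `²T` obtained by doubling every edge decomposes into at most 2 locally
irregular submultigraphs. -/
theorem lir_doubled_tree_le_two {V : Type*} [Fintype V] (T : SimpleGraph V)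
    (htree : T.IsTree) (hK2 : ¬Nonempty (T ≃g (⊤ : SimpleGraph (Fin 2)))) :
    ∃ μs : Fin 2 → V → V → ℕ, IsLirDecomp T 2 μs := by
  classical
  rcases subsingleton_or_nontrivial V with hV | hV
  · exact htree.exists_isLirDecomp_of_coloring (c := 0)
      (fun v w h => (h.ne (Subsingleton.elim v w)).elim) (by simp)
  obtain ⟨ℓ, hℓ⟩ := htree.exists_vert_degree_one_of_nontrivial
  obtain ⟨b, hℓb⟩ := card_eq_one.mp ((T.card_neighborFinset_eq_degree ℓ).trans hℓ)
  have hadj : T.Adj ℓ b := (mem_neighborFinset T ℓ b).mp (hℓb ▸ mem_singleton_self b)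
  have hb : 2 ≤ T.degree b := by
    by_contra! hlt
    have hb1 : T.degree b = 1 := by
      have := (T.degree_pos_iff_exists_adj b).mpr ⟨ℓ, hadj.symm⟩
      omega
    exact hK2 (htree.connected.nonempty_iso_top_of_neighborFinset_eq hℓb
      (neighborFinset_eq_singleton_of_degree_eq_one hb1 hadj.symm))
  set c : V → ZMod 2 := fun v => T.dist ℓ v + 1
  have hc (v w : V) (hadj : T.Adj v w) : c v ≠ c w :=
    fun h => htree.cast_dist_ne_of_adj ℓ hadj (add_right_cancel h)
  obtain hsum | hsum := (by decide : ∀ a : ZMod 2, a = 0 ∨ a = 1) (∑ v, c v)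
  · exact htree.exists_isLirDecomp_of_coloring hc hsum
  · exact htree.exists_isLirDecomp_of_coloring_of_leaf hc hsum hℓb hb (by simp [c])
end
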